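/- arXiv:2202.06287 — 2 statements merged into one kernel-verified Lean document; each statement's English description precedes it below -/
import Mathlib

section
/- As x → ∞, P(x,2,x) tends to 1 − 1/e. -/
open Real Filter

open scoped Classical

noncomputable section

/-- The finite set of primes not exceeding `y`. -/
def primesLE (y : ℝ) : Finset ℕ := (Finset.range (⌊y⌋₊ + 1)).filter Nat.Prime

/-- `ζ(s, y) = ∏_{p ≤ y} (1 - p^{-s})⁻¹`. -/
def zetaS (s y : ℝ) : ℝ := ∏ p ∈ primesLE y, (1 - (p : ℝ) ^ (-s))⁻¹

/-- `φ_y(s) = ∑_{p ≤ y} log p / (p^s - 1)`. -/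
def phiS (y s : ℝ) : ℝ := ∑ p ∈ primesLE y, Real.log p / ((p : ℝ) ^ s - 1)

/-- The saddle point `α(x, y)`: the unique positive solution of `φ_y(α) = log x`. -/
def saddle (x y : ℝ) : ℝ := Classical.epsilon fun s : ℝ => 0 < s ∧ phiS y s = Real.log x

/-- The set `S(X, y)` of `y`-friable integers `n` with `1 ≤ n ≤ X`, as a finset. -/
def smoothSet (X y : ℝ) : Finset ℕ :=
  (Finset.Icc 1 ⌊X⌋₊).filter fun n => ∀ p ∈ n.primeFactors, (p : ℝ) ≤ y

/-- `Ψ(x, y) = #S(x, y)`. -/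
def Psi (x y : ℝ) : ℝ := (smoothSet x y).card

/-- `D(x, y, z) = ∑_{n ∈ S(z, y)} n^{-α(x, y)}`. -/
def Dxyz (x y z : ℝ) : ℝ := ∑ n ∈ smoothSet z y, (n : ℝ) ^ (-(saddle x y))

/-- `P(x, y, z) = D(x, y, z) / ζ(α, y)`. -/
def Pxyz (x y z : ℝ) : ℝ := Dxyz x y z / zetaS (saddle x y) y

/-- `u = log x / log y`. -/
def uxy (x y : ℝ) : ℝ := Real.log x / Real.log y

/-- `ū = min(y, log x) / log y`. -/
def ubar (x y : ℝ) : ℝ := min y (Real.log x) / Real.log y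

/-- `Θ(x, y) > 0`, defined by `Θ² = |φ'_y(α)| / (log y)²`. -/
def Theta (x y : ℝ) : ℝ := Real.sqrt (|deriv (phiS y) (saddle x y)| / (Real.log y) ^ 2)

/-- The standard normal distribution function `Φ`. -/
def gaussPhi (h : ℝ) : ℝ := (Real.sqrt (2 * Real.pi))⁻¹ * ∫ t in Set.Iic h, Real.exp (-t ^ 2 / 2)

lemma primesLE_two : primesLE 2 = {2} := by
  have h2 : ⌊(2:ℝ)⌋₊ = 2 := by norm_num
  rw [primesLE, h2]
  decide

lemma phiS_two (s : ℝ) : phiS 2 s = Real.log 2 / ((2:ℝ) ^ s - 1) := by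
  rw [phiS, primesLE_two]
  norm_num

lemma zetaS_two (s : ℝ) : zetaS s 2 = (1 - (2:ℝ) ^ (-s))⁻¹ := by
  rw [zetaS, primesLE_two]
  norm_num

lemma saddle_spec {x : ℝ} (hx : 2 ≤ x) :
    0 < saddle x 2 ∧ phiS 2 (saddle x 2) = Real.log x := by
  have hlx : 0 < Real.log x := Real.log_pos (by linarith)
  have hl2 : 0 < Real.log 2 := Real.log_pos one_lt_two
  have ht : 0 < Real.log 2 / Real.log x := div_pos hl2 hlx
  set t := Real.log 2 / Real.log x with htdef
  have h1t : (1:ℝ) < 1 + t := by linarith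
  have hex : ∃ s : ℝ, 0 < s ∧ phiS 2 s = Real.log x := by
    refine ⟨Real.log (1 + t) / Real.log 2, div_pos (Real.log_pos h1t) hl2, ?_⟩
    have h2s : (2:ℝ) ^ (Real.log (1 + t) / Real.log 2) = 1 + t := by
      rw [Real.rpow_def_of_pos (by norm_num : (0:ℝ) < 2)]
      rw [mul_div_assoc', mul_comm, mul_div_assoc, div_self hl2.ne', mul_one,
        Real.exp_log (by linarith)]
    rw [phiS_two, h2s]
    have : (1 + t - 1) = t := by ring
    rw [this, htdef]
    field_simp
  exact Classical.epsilon_spec hex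

lemma two_rpow_saddle {x : ℝ} (hx : 2 ≤ x) :
    (2:ℝ) ^ (saddle x 2) = 1 + Real.log 2 / Real.log x := by
  obtain ⟨hpos, heq⟩ := saddle_spec hx
  have hlx : 0 < Real.log x := Real.log_pos (by linarith)
  have h2a : 1 < (2:ℝ) ^ (saddle x 2) :=
    (Real.one_lt_rpow_iff_of_pos (by norm_num)).mpr (Or.inl ⟨by norm_num, hpos⟩)
  rw [phiS_two] at heq
  have hsub : (2:ℝ) ^ (saddle x 2) - 1 ≠ 0 := by linarith
  rw [div_eq_iff hsub] at heq
  have : (2:ℝ) ^ (saddle x 2) - 1 = Real.log 2 / Real.log x := by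
    rw [eq_div_iff hlx.ne']
    linarith [heq]
  linarith [this]

lemma smoothSet_two {x : ℝ} (hx : 2 ≤ x) :
    smoothSet x 2 = (Finset.range (Nat.log 2 ⌊x⌋₊ + 1)).image (2 ^ ·) := by
  have h0 : ⌊x⌋₊ ≠ 0 := by
    have := Nat.floor_pos.mpr (show (1:ℝ) ≤ x by linarith); omega
  ext n
  simp only [smoothSet, Finset.mem_filter, Finset.mem_Icc, Finset.mem_image,
    Finset.mem_range]
  constructor
  · rintro ⟨⟨h1n, hnf⟩, hp⟩
    have hsub : n.primeFactors ⊆ {2} := by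
      intro p hp'
      have hple : (p:ℝ) ≤ 2 := hp p hp'
      have hprime : p.Prime := Nat.prime_of_mem_primeFactors hp'
      have h2p : 2 ≤ p := hprime.two_le
      have hp2 : p ≤ 2 := by exact_mod_cast hple
      simp only [Finset.mem_singleton]
      omega
    have hn0 : n ≠ 0 := by omega
    have hn2 : n = 2 ^ (n.factorization 2) := by
      refine Nat.eq_pow_of_factorization_eq_single hn0 ?_
      rwa [← Finsupp.support_subset_singleton, Nat.support_factorization]
    refine ⟨n.factorization 2, ?_, hn2.symm⟩
    have : Nat.log 2 n = n.factorization 2 := by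
      conv_lhs => rw [hn2]
      exact Nat.log_pow (by norm_num) _
    have hmono := Nat.log_mono_right (b := 2) hnf
    omega
  · rintro ⟨j, hj, rfl⟩
    refine ⟨⟨Nat.one_le_two_pow, ?_⟩, ?_⟩
    · calc 2 ^ j ≤ 2 ^ (Nat.log 2 ⌊x⌋₊) := Nat.pow_le_pow_right (by norm_num) (by omega)
        _ ≤ ⌊x⌋₊ := Nat.pow_log_le_self 2 h0
    · intro p hp'
      have hprime : p.Prime := Nat.prime_of_mem_primeFactors hp'
      have hdvd : p ∣ 2 ^ j := Nat.dvd_of_mem_primeFactors hp'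
      have : p ∣ 2 := hprime.dvd_of_dvd_pow hdvd
      have : p ≤ 2 := Nat.le_of_dvd (by norm_num) this
      exact_mod_cast Nat.cast_le.mpr this

lemma Pxyz_two_eq {x : ℝ} (hx : 2 ≤ x) :
    Pxyz x 2 x = 1 - Real.exp (-(((Nat.log 2 ⌊x⌋₊ + 1 : ℕ) : ℝ) *
      Real.log (1 + Real.log 2 / Real.log x))) := by
  have hlx : 0 < Real.log x := Real.log_pos (by linarith)
  have hl2 : 0 < Real.log 2 := Real.log_pos one_lt_two
  have ht : 0 < Real.log 2 / Real.log x := div_pos hl2 hlx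
  set t := Real.log 2 / Real.log x with htdef
  have hpos := (saddle_spec hx).1
  set α := saddle x 2 with hαdef
  set r : ℝ := (2:ℝ) ^ (-α) with hrdef
  have hr1 : r < 1 := Real.rpow_lt_one_of_one_lt_of_neg one_lt_two (by linarith)
  have hrne : r ≠ 1 := ne_of_lt hr1
  set k : ℕ := Nat.log 2 ⌊x⌋₊ with hkdef
  have hD : Dxyz x 2 x = (r ^ (k + 1) - 1) / (r - 1) := by
    rw [Dxyz, smoothSet_two hx, Finset.sum_image
      (fun i _ j _ h => Nat.pow_right_injective (le_refl 2) h)]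
    rw [← geom_sum_eq hrne (k + 1)]
    refine Finset.sum_congr rfl (fun j _ => ?_)
    push_cast
    rw [← Real.rpow_natCast 2 j, ← Real.rpow_mul (by norm_num), mul_comm,
      Real.rpow_mul (by norm_num), Real.rpow_natCast]
  have hz : zetaS α 2 = (1 - r)⁻¹ := zetaS_two α
  have hr1' : r - 1 ≠ 0 := sub_ne_zero.mpr hrne
  have hP : Pxyz x 2 x = 1 - r ^ (k + 1) := by
    have h1r : (1:ℝ) - r ≠ 0 := by
      intro h
      exact hrne (by linarith)
    rw [Pxyz, ← hαdef, hz, hD, div_inv_eq_mul]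
    field_simp
    ring
  have h2α : (2:ℝ) ^ α = 1 + t := two_rpow_saddle hx
  have hrinv : r = (1 + t)⁻¹ := by
    rw [hrdef, Real.rpow_neg (by norm_num), h2α]
  have h1t : (0:ℝ) < 1 + t := by linarith
  have hpow : (1 + t) ^ (k + 1) = Real.exp ((((k:ℕ) + 1 : ℕ) : ℝ) * Real.log (1 + t)) := by
    rw [← Real.log_pow, Real.exp_log (pow_pos h1t _)]
  rw [hP, hrinv, inv_pow, hpow, ← Real.exp_neg]

lemma log_one_add_div_tendsto :
    Tendsto (fun u : ℝ => Real.log (1 + u) / u) (nhdsWithin 0 {0}ᶜ) (nhds 1) := by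
  have hd : HasDerivAt Real.log 1 1 := by simpa using Real.hasDerivAt_log one_ne_zero
  have hs := hasDerivAt_iff_tendsto_slope.mp hd
  have hmap : Tendsto (fun u : ℝ => 1 + u) (nhdsWithin 0 {0}ᶜ) (nhdsWithin 1 {1}ᶜ) := by
    rw [tendsto_nhdsWithin_iff]
    constructor
    · have : Tendsto (fun u : ℝ => 1 + u) (nhds 0) (nhds (1 + 0)) :=
        (continuous_const.add continuous_id).tendsto 0
      simpa using this.mono_left nhdsWithin_le_nhds
    · filter_upwards [self_mem_nhdsWithin] with u hu
      have hu' : u ≠ 0 := hu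
      simpa using fun h => hu' (by linarith)
  have h2 := hs.comp hmap
  refine h2.congr (fun u => ?_)
  simp [slope_def_field, Function.comp]

lemma key_limit :
    Tendsto (fun x : ℝ => ((Nat.log 2 ⌊x⌋₊ + 1 : ℕ) : ℝ) *
      Real.log (1 + Real.log 2 / Real.log x)) atTop (nhds 1) := by
  have ht0 : Tendsto (fun x : ℝ => Real.log 2 / Real.log x) atTop (nhds 0) :=
    Tendsto.div_atTop tendsto_const_nhds Real.tendsto_log_atTop
  -- A x := (k+1) * (log 2 / log x) → 1 by squeeze
  have hA : Tendsto (fun x : ℝ => ((Nat.log 2 ⌊x⌋₊ + 1 : ℕ) : ℝ) *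
      (Real.log 2 / Real.log x)) atTop (nhds 1) := by
    have hup : Tendsto (fun x : ℝ => 1 + Real.log 2 / Real.log x) atTop (nhds 1) := by
      have := tendsto_const_nhds (x := (1:ℝ)) (f := atTop).add ht0
      simpa using this
    refine tendsto_of_tendsto_of_tendsto_of_le_of_le' tendsto_const_nhds hup ?_ ?_
    · filter_upwards [eventually_ge_atTop (2:ℝ)] with x hx
      have hlx : 0 < Real.log x := Real.log_pos (by linarith)
      have h0 : ⌊x⌋₊ ≠ 0 := by
        have := Nat.floor_pos.mpr (show (1:ℝ) ≤ x by linarith); omega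
      have hxlt : x < ((2:ℕ) ^ (Nat.log 2 ⌊x⌋₊ + 1) : ℕ) := by
        calc x < (⌊x⌋₊ + 1 : ℕ) := by exact_mod_cast Nat.lt_floor_add_one x
          _ ≤ _ := by exact_mod_cast Nat.succ_le_of_lt (Nat.lt_pow_succ_log_self (by norm_num) _)
      have hlog : Real.log x ≤ ((Nat.log 2 ⌊x⌋₊ + 1 : ℕ) : ℝ) * Real.log 2 := by
        have h1 := Real.log_le_log (by linarith) hxlt.le
        rwa [Nat.cast_pow, Real.log_pow, Nat.cast_ofNat] at h1
      rw [mul_div_assoc']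
      exact (one_le_div hlx).mpr hlog
    · filter_upwards [eventually_ge_atTop (2:ℝ)] with x hx
      have hlx : 0 < Real.log x := Real.log_pos (by linarith)
      have h0 : ⌊x⌋₊ ≠ 0 := by
        have := Nat.floor_pos.mpr (show (1:ℝ) ≤ x by linarith); omega
      have hle : ((2:ℕ) ^ (Nat.log 2 ⌊x⌋₊) : ℕ) ≤ x := by
        calc ((2:ℕ) ^ (Nat.log 2 ⌊x⌋₊) : ℕ) ≤ (⌊x⌋₊ : ℝ) := by
              exact_mod_cast Nat.pow_log_le_self 2 h0
          _ ≤ x := Nat.floor_le (by linarith)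
      have hlog : ((Nat.log 2 ⌊x⌋₊ : ℕ) : ℝ) * Real.log 2 ≤ Real.log x := by
        have h1 := Real.log_le_log (by positivity) hle
        rwa [Nat.cast_pow, Real.log_pow, Nat.cast_ofNat] at h1
      have hnum : ((Nat.log 2 ⌊x⌋₊ + 1 : ℕ) : ℝ) * Real.log 2 ≤
          Real.log x + Real.log 2 := by
        push_cast
        push_cast at hlog
        nlinarith [Real.log_pos one_lt_two]
      rw [mul_div_assoc']
      calc ((Nat.log 2 ⌊x⌋₊ + 1 : ℕ) : ℝ) * Real.log 2 / Real.log x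
          ≤ (Real.log x + Real.log 2) / Real.log x := by
            exact (div_le_div_iff_of_pos_right hlx).mpr hnum
        _ = 1 + Real.log 2 / Real.log x := by field_simp
  -- B x := log(1+t)/t → 1
  have htW : Tendsto (fun x : ℝ => Real.log 2 / Real.log x) atTop
      (nhdsWithin 0 {0}ᶜ) := by
    rw [tendsto_nhdsWithin_iff]
    refine ⟨ht0, ?_⟩
    filter_upwards [eventually_ge_atTop (2:ℝ)] with x hx
    have hlx : 0 < Real.log x := Real.log_pos (by linarith)
    have : 0 < Real.log 2 / Real.log x := div_pos (Real.log_pos one_lt_two) hlx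
    exact ne_of_gt this
  have hB : Tendsto (fun x : ℝ =>
      Real.log (1 + Real.log 2 / Real.log x) / (Real.log 2 / Real.log x))
      atTop (nhds 1) := log_one_add_div_tendsto.comp htW
  have hAB := hA.mul hB
  rw [mul_one] at hAB
  refine hAB.congr' ?_
  filter_upwards [eventually_ge_atTop (2:ℝ)] with x hx
  have hlx : 0 < Real.log x := Real.log_pos (by linarith)
  have ht : Real.log 2 / Real.log x ≠ 0 :=
    ne_of_gt (div_pos (Real.log_pos one_lt_two) hlx)
  field_simp

/-- As `x → ∞`, `P(x, 2, x)` tends to `1 - 1/e`. -/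
theorem P_x2x_tendsto :
    Tendsto (fun x : ℝ => Pxyz x 2 x) atTop (nhds (1 - Real.exp (-1))) := by
  have h1 : Tendsto (fun x : ℝ => 1 - Real.exp (-(((Nat.log 2 ⌊x⌋₊ + 1 : ℕ) : ℝ) *
      Real.log (1 + Real.log 2 / Real.log x)))) atTop (nhds (1 - Real.exp (-1))) := by
    have := (Real.continuous_exp.tendsto (-1)).comp key_limit.neg
    exact tendsto_const_nhds.sub this
  refine h1.congr' ?_
  filter_upwards [eventually_ge_atTop (2:ℝ)] with x hx
  exact (Pxyz_two_eq hx).symm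

end
end

section
/- There exists an absolute constant C such that for all u ≥ 2, ∫_0^{u − u^{2/3}} e^{v·ξ(u)}·ρ(v) dv ≤ C·ρ̂(−ξ(u))·e^{−u^{1/3}/5}. -/
/-!
Write `L(c) = ρ̂(-c)`. Since `e^{vξ} ≤ e^{ηT} e^{v(ξ-η)}` for `0 ≤ v ≤ T`, the truncated integral is
at most `e^{ηT} L(ξ - η)`. Extending `ρ` by `0` to the negative reals, the Dickman equation becomes
the convolution identity `v ρ(v) = ∫_{v-1}^{v} ρ`, whose exponentially tilted Laplace transform is
`∫ v ρ(v) e^{cv} dv = ((e^c - 1)/c) L(c)`; thus `(log L)' = (e^c - 1)/c`, which is at least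
`u(1 - η) - 1` on `[ξ - η, ξ]` because `e^ξ = 1 + uξ`. Integrating (in `n` small steps, each using
`e^{hv} ≥ 1 + hv`) gives `L(ξ - η) ≤ e^{1 - η(u(1-η) - 1)} L(ξ)`, and with `u = r³`, `η = 1/(2r)`,
`T = r³ - r²` the total exponent is `1 + η - r/4 ≤ 2 - r/5`.
-/

open Real Filter

open scoped Classical

noncomputable section

/-- `ξ(t)`: for `t > 1`, the unique positive solution of `e^ξ = 1 + tξ`; `ξ(t) = 0` for `t ≤ 1`. -/
def xiF (t : ℝ) : ℝ :=
  if t ≤ 1 then 0 else Classical.epsilon fun s : ℝ => 0 < s ∧ Real.exp s = 1 + t * s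

/-- The defining properties of the Dickman function `ρ`: continuous on `[0, ∞)`, equal to `1`
on `[0, 1]`, differentiable on `(1, ∞)` where it satisfies `tρ'(t) + ρ(t-1) = 0`. -/
def IsDickman (ρ : ℝ → ℝ) : Prop :=
  ContinuousOn ρ (Set.Ici 0) ∧ (∀ t ∈ Set.Icc (0 : ℝ) 1, ρ t = 1) ∧
    (∀ t, 1 < t → DifferentiableAt ℝ ρ t) ∧ ∀ t, 1 < t → t * deriv ρ t + ρ (t - 1) = 0

/-- `ρ̂(-s) = ∫_0^∞ ρ(v) e^{vs} dv`. -/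
def rhoHat (ρ : ℝ → ℝ) (s : ℝ) : ℝ := ∫ v in Set.Ioi (0 : ℝ), ρ v * Real.exp (v * s)

open MeasureTheory Set Asymptotics

open scoped Convolution

theorem exp_sub_one_le_one_add_div_pow {m : ℝ} {n : ℕ} (hm : 0 ≤ m) (hn : m ^ 2 ≤ n) :
    exp (m - 1) ≤ (1 + m / n) ^ n := by
  obtain rfl | hn0 := n.eq_zero_or_pos
  · have hm0 : m = 0 := by norm_num at hn; nlinarith
    simp [hm0]
  have hn0' : (0 : ℝ) < n := Nat.cast_pos.2 hn0
  have hx : 0 < 1 + m / n := by positivity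
  rw [← exp_log (pow_pos hx n), log_pow, exp_le_exp]
  calc m - 1 ≤ n * (1 - (1 + m / n)⁻¹) := by
        rw [show n * (1 - (1 + m / n)⁻¹) = n * m / (n + m) by field_simp; ring,
          le_div_iff₀ (by positivity)]
        nlinarith
    _ ≤ n * log (1 + m / n) := by gcongr; exact one_sub_inv_le_log_of_pos hx

theorem xiF_spec {t : ℝ} (ht : 1 < t) : 0 < xiF t ∧ exp (xiF t) = 1 + t * xiF t := by
  have ht₀ : 0 < t := zero_lt_one.trans ht
  have hex : ∃ s : ℝ, 0 < s ∧ exp s = 1 + t * s := by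
    have hlow : exp (log t) - (1 + t * log t) ≤ 0 := by
      have h := mul_le_mul_of_nonneg_left (one_sub_inv_le_log_of_pos ht₀) ht₀.le
      rw [mul_sub, mul_inv_cancel₀ ht₀.ne', mul_one] at h
      rw [exp_log ht₀]
      linarith
    have hhigh : 0 ≤ exp (3 * t) - (1 + t * (3 * t)) := by
      have h := pow_le_pow_left₀ (by linarith) (add_one_le_exp t) 3
      rw [← exp_nat_mul] at h
      push_cast at h
      nlinarith [pow_pos ht₀ 3]
    have hlog : log t ≤ 3 * t := by linarith [log_le_sub_one_of_pos ht₀]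
    obtain ⟨s, hs, hs0⟩ := intermediate_value_Icc hlog
      (by fun_prop : ContinuousOn (fun s => exp s - (1 + t * s)) _) ⟨hlow, hhigh⟩
    exact ⟨s, (log_pos ht).trans_le hs.1, by linarith [show exp s - (1 + t * s) = 0 from hs0]⟩
  rw [xiF, if_neg ht.not_ge]
  exact Classical.epsilon_spec hex

theorem half_lt_xiF {t : ℝ} (ht : 2 ≤ t) : 1 / 2 < xiF t := by
  obtain ⟨hpos, heq⟩ := xiF_spec (by linarith : 1 < t)
  by_contra! hle
  have h1 := exp_bound_div_one_sub_of_interval' hpos (by linarith)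
  rw [lt_div_iff₀ (by linarith), heq] at h1
  nlinarith [mul_nonneg (mul_nonneg (sub_nonneg.2 ht) hpos.le) (by linarith : 0 ≤ 1 - xiF t),
    mul_nonneg hpos.le (by linarith : 0 ≤ 1 - 2 * xiF t)]

theorem mul_one_sub_sub_one_le_exp_sub_one_div {u ξ η x : ℝ} (hξ : exp ξ = 1 + u * ξ)
    (hηξ : η ≤ ξ) (hβ : 0 ≤ u * (1 - η) - 1) (hx : x ∈ Icc (ξ - η) ξ) (hx₀ : 0 < x) :
    u * (1 - η) - 1 ≤ (exp x - 1) / x := by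
  rw [le_div_iff₀ hx₀]
  calc (u * (1 - η) - 1) * x ≤ (u * (1 - η) - 1) * ξ := mul_le_mul_of_nonneg_left hx.2 hβ
    _ ≤ exp ξ * (1 - η) - 1 := by rw [hξ]; linarith
    _ ≤ exp ξ * exp (-η) - 1 := by gcongr; linarith [add_one_le_exp (-η)]
    _ ≤ exp x - 1 := by rw [← exp_add]; gcongr; linarith [hx.1]

/-- The Dickman function continued by `1` to the negative reals, so that it is continuous on `ℝ`. -/
structure IsExtendedDickman (D : ℝ → ℝ) : Prop where
  continuous : Continuous D
  eq_one : ∀ x ≤ 1, D x = 1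
  hasDerivAt : ∀ t, 1 < t → HasDerivAt D (-D (t - 1) / t) t

theorem IsDickman.extend {ρ : ℝ → ℝ} (hρ : IsDickman ρ) :
    IsExtendedDickman fun x => ρ (max x 0) where
  continuous := hρ.1.comp_continuous (continuous_id.max continuous_const) fun x => le_max_right x 0
  eq_one x hx := hρ.2.1 _ ⟨le_max_right x 0, max_le hx zero_le_one⟩
  hasDerivAt t ht := by
    obtain ⟨-, -, hdiff, hode⟩ := hρ
    have heq : (fun x => ρ (max x 0)) =ᶠ[nhds t] ρ := by
      filter_upwards [lt_mem_nhds (by linarith : (0 : ℝ) < t)] with x hx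
      rw [max_eq_left hx.le]
    rw [heq.hasDerivAt_iff, max_eq_left (by linarith : (0 : ℝ) ≤ t - 1)]
    convert (hdiff t ht).hasDerivAt using 1
    field_simp
    linarith [hode t ht]

namespace IsExtendedDickman

variable {D : ℝ → ℝ}

theorem mul_eq_integral (hD : IsExtendedDickman D) {t : ℝ} (ht : 1 ≤ t) :
    t * D t = ∫ x in (t - 1)..t, D x := by
  set F := fun y => ∫ z in (0 : ℝ)..y, D z
  have hF : ∀ x, HasDerivAt F (D x) x := fun x =>
    (hD.continuous.integral_hasStrictDerivAt 0 x).hasDerivAt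
  have hsub : ∀ x, ∫ z in (x - 1)..x, D z = F x - F (x - 1) := fun x =>
    (intervalIntegral.integral_interval_sub_left (hD.continuous.intervalIntegrable _ _)
      (hD.continuous.intervalIntegrable _ _)).symm
  set G := fun x => x * D x - (F x - F (x - 1))
  have hG1 : G 1 = 0 := by
    have : F 1 = ∫ _ in (0 : ℝ)..1, (1 : ℝ) :=
      intervalIntegral.integral_congr fun x hx => hD.eq_one x (by simpa using hx.2)
    simp [G, F, this, hD.eq_one 1 le_rfl]
  suffices G t = G 1 by rw [hsub]; simp only [G] at this; linarith
  rcases ht.eq_or_lt with rfl | ht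
  · rfl
  have hGcont : Continuous G := by
    have hDc := hD.continuous
    have hFc : Continuous F := continuous_iff_continuousAt.2 fun x => (hF x).continuousAt
    fun_prop
  obtain ⟨c, hc, hc0⟩ := exists_hasDerivAt_eq_slope G (fun _ => 0) ht hGcont.continuousOn
    fun x hx => by
      have hx0 : x ≠ 0 := by linarith [hx.1]
      refine (((hasDerivAt_id x).mul (hD.hasDerivAt x hx.1)).sub
        ((hF x).sub ((hF (x - 1)).comp x ((hasDerivAt_id x).sub_const 1)))).congr_deriv ?_
      simp only [id]
      field_simp
      ring
  rw [eq_comm, div_eq_zero_iff, sub_eq_zero] at hc0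
  exact hc0.resolve_right (by linarith)

theorem pos (hD : IsExtendedDickman D) (x : ℝ) : 0 < D x := by
  by_contra! hx
  set S := D ⁻¹' Iic 0
  have hS1 : ∀ t ∈ S, 1 < t := fun t ht => by
    by_contra! h
    have : D t ≤ 0 := ht
    linarith [hD.eq_one t h]
  have hbdd : BddBelow S := ⟨1, fun t ht => (hS1 t ht).le⟩
  have ht₀ : sInf S ∈ S := (isClosed_Iic.preimage hD.continuous).csInf_mem ⟨x, hx⟩ hbdd
  have hbefore : ∀ y < sInf S, 0 < D y := fun y hy => by
    by_contra! h
    exact (csInf_le hbdd h).not_gt hy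
  have hint : 0 < ∫ y in (sInf S - 1)..sInf S, D y :=
    intervalIntegral.intervalIntegral_pos_of_pos_on (hD.continuous.intervalIntegrable _ _)
      (fun y hy => hbefore y hy.2) (by linarith)
  rw [← hD.mul_eq_integral (hS1 _ ht₀).le] at hint
  have : D (sInf S) ≤ 0 := ht₀
  nlinarith [hS1 _ ht₀]

theorem antitone (hD : IsExtendedDickman D) : Antitone D := by
  refine AntitoneOn.Iic_union_Ici (a := 1)
    (fun x hx y hy _ => by rw [hD.eq_one x hx, hD.eq_one y hy]) ?_
  refine antitoneOn_of_hasDerivWithinAt_nonpos (f' := fun t => -D (t - 1) / t) (convex_Ici 1)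
    hD.continuous.continuousOn (fun x hx => ?_) fun x hx => ?_
  · rw [interior_Ici] at hx
    exact (hD.hasDerivAt x hx).hasDerivWithinAt
  · rw [interior_Ici] at hx
    exact div_nonpos_of_nonpos_of_nonneg (neg_nonpos.2 (hD.pos _).le) (zero_le_one.trans hx.le)

theorem le_one (hD : IsExtendedDickman D) (x : ℝ) : D x ≤ 1 :=
  hD.eq_one (min x 1) (min_le_right x 1) ▸ hD.antitone (min_le_left x 1)

theorem mul_le_apply_sub_one (hD : IsExtendedDickman D) {v : ℝ} (hv : 1 ≤ v) :
    v * D v ≤ D (v - 1) := by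
  rw [hD.mul_eq_integral hv]
  calc ∫ x in (v - 1)..v, D x ≤ ∫ _ in (v - 1)..v, D (v - 1) :=
        intervalIntegral.integral_mono_on (by linarith) (hD.continuous.intervalIntegrable _ _)
          intervalIntegrable_const fun x hx => hD.antitone hx.1
    _ = D (v - 1) := by simp

theorem le_exp_neg_mul_nat (hD : IsExtendedDickman D) {a : ℝ} (ha : 0 ≤ a) (n : ℕ) {v : ℝ}
    (hv : exp a + n ≤ v) : D v ≤ exp (-(a * n)) := by
  induction n generalizing v with
  | zero => simpa using hD.le_one v
  | succ n ih =>
    push_cast at hv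
    have hprev := ih (v := v - 1) (by linarith)
    have hstep := hD.mul_le_apply_sub_one (by linarith [one_le_exp ha] : 1 ≤ v)
    rw [show -(a * (n + 1 : ℕ)) = -(a * n) - a by push_cast; ring, exp_sub,
      le_div_iff₀ (exp_pos a)]
    nlinarith [hD.pos v]

theorem isBigO_exp_neg_mul (hD : IsExtendedDickman D) {a : ℝ} (ha : 0 ≤ a) :
    D =O[atTop] fun v => exp (-a * v) := by
  refine IsBigO.of_bound (exp (a * (exp a + 1))) ?_
  filter_upwards [eventually_ge_atTop (exp a)] with v hv
  have hn := Nat.floor_le (sub_nonneg.2 hv)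
  have hn' := Nat.lt_floor_add_one (v - exp a)
  rw [norm_of_nonneg (hD.pos v).le, norm_of_nonneg (exp_pos _).le, ← exp_add]
  calc D v ≤ exp (-(a * ⌊v - exp a⌋₊)) := hD.le_exp_neg_mul_nat ha _ (by linarith)
    _ ≤ exp (a * (exp a + 1) + -a * v) :=
      exp_le_exp.2 (by nlinarith [mul_nonneg ha (by linarith : 0 ≤ ⌊v - exp a⌋₊ + 1 - (v - exp a))])

theorem integrableOn_rhoHat (hD : IsExtendedDickman D) (c : ℝ) :
    IntegrableOn (fun v => D v * exp (v * c)) (Ioi 0) := by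
  refine integrable_of_isBigO_exp_neg one_pos
    (hD.continuous.mul (by fun_prop)).continuousOn ?_
  refine ((hD.isBigO_exp_neg_mul (a := |c| + 1) (by positivity)).mul
    (isBigO_refl (fun v => exp (v * c)) atTop)).trans (IsBigO.of_bound 1 ?_)
  filter_upwards [eventually_ge_atTop 0] with v hv
  rw [norm_of_nonneg (by positivity), norm_of_nonneg (by positivity), ← exp_add, one_mul]
  exact exp_le_exp.2 (by nlinarith [le_abs_self c])

theorem integrableOn_id_mul_rhoHat (hD : IsExtendedDickman D) (c : ℝ) :
    IntegrableOn (fun v => v * (D v * exp (v * c))) (Ioi 0) := by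
  refine (hD.integrableOn_rhoHat (c + 1)).mono'
    ((continuous_id.mul (hD.continuous.mul (by fun_prop))).aestronglyMeasurable) ?_
  filter_upwards [ae_restrict_mem measurableSet_Ioi] with v (hv : 0 < v)
  rw [norm_of_nonneg (mul_nonneg hv.le (mul_nonneg (hD.pos v).le (exp_pos _).le)), mul_add,
    mul_one, exp_add]
  nlinarith [mul_le_mul_of_nonneg_right (by linarith [add_one_le_exp v] : v ≤ exp v)
    (mul_nonneg (hD.pos v).le (exp_pos (v * c)).le)]

theorem rhoHat_nonneg (hD : IsExtendedDickman D) (c : ℝ) : 0 ≤ rhoHat D c :=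
  setIntegral_nonneg measurableSet_Ioi fun v _ => mul_nonneg (hD.pos v).le (exp_pos _).le

theorem mul_indicator_eq_integral (hD : IsExtendedDickman D) (v : ℝ) :
    v * (Ioi 0).indicator D v = ∫ x in (v - 1)..v, (Ioi 0).indicator D x := by
  rcases le_or_gt 1 v with hv | hv
  · rw [indicator_of_mem (show v ∈ Ioi 0 by simp only [mem_Ioi]; linarith), hD.mul_eq_integral hv]
    refine intervalIntegral.integral_congr_ae (ae_of_all _ fun x hx => ?_)
    rw [uIoc_of_le (by linarith)] at hx
    exact (indicator_of_mem (show x ∈ Ioi 0 by simp only [mem_Ioi]; linarith [hx.1]) D).symm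
  have hone : ∫ x in (v - 1)..v, (Ioi 0).indicator D x =
      ∫ x in (v - 1)..v, (Ioi 0).indicator 1 x := by
    refine intervalIntegral.integral_congr_ae (ae_of_all _ fun x hx => ?_)
    rw [uIoc_of_le (by linarith)] at hx
    by_cases hx0 : x ∈ Ioi 0
    · simp [hx0, hD.eq_one x (by linarith [hx.2])]
    · simp [hx0]
  rw [hone, intervalIntegral.integral_of_le (by linarith), setIntegral_indicator measurableSet_Ioi,
    Ioc_inter_Ioi, max_eq_right (by linarith), Pi.one_def, setIntegral_const, volume_real_Ioc]
  rcases lt_or_ge 0 v with hv0 | hv0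
  · simp [hv0, hD.eq_one v hv.le, hv0.le]
  · simp [hv0, not_lt.2 hv0]

theorem integral_id_mul_eq (hD : IsExtendedDickman D) {c : ℝ} (hc : c ≠ 0) :
    ∫ v in Ioi 0, v * (D v * exp (v * c)) = (exp c - 1) / c * rhoHat D c := by
  set E := (Ioi (0 : ℝ)).indicator D
  set φ := (Ioc (0 : ℝ) 1).indicator fun t => exp (t * c)
  set g := fun x => E x * exp (x * c)
  have hindicator (f : ℝ → ℝ) : (Ioi 0).indicator (fun v => D v * f v) = fun v => E v * f v := by
    ext v
    by_cases hv : v ∈ Ioi (0 : ℝ) <;> simp [E, hv]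
  have hg : Integrable g := by
    change Integrable fun x => E x * exp (x * c)
    rw [← hindicator]
    exact (integrable_indicator_iff measurableSet_Ioi).2 (hD.integrableOn_rhoHat c)
  have hφ : Integrable φ :=
    (integrable_indicator_iff measurableSet_Ioc).2 (by fun_prop : Continuous _).integrableOn_Ioc
  have hconv (v : ℝ) : (φ ⋆[ContinuousLinearMap.mul ℝ ℝ] g) v = v * g v := by
    have htilt (t : ℝ) :
        φ t * g (v - t) = (Ioc 0 1).indicator (fun t => E (v - t) * exp (v * c)) t := by
      by_cases ht : t ∈ Ioc (0 : ℝ) 1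
      · simp only [φ, g, indicator_of_mem ht]
        rw [mul_left_comm, ← exp_add]
        ring_nf
      · simp [φ, ht]
    simp_rw [convolution_mul, htilt]
    rw [integral_indicator measurableSet_Ioc, integral_mul_const,
      ← intervalIntegral.integral_of_le zero_le_one,
      intervalIntegral.integral_comp_sub_left (fun x => E x) v, sub_zero,
      ← hD.mul_indicator_eq_integral, mul_assoc]
  have hφint : ∫ t, φ t = (exp c - 1) / c := by
    rw [integral_indicator measurableSet_Ioc, ← intervalIntegral.integral_of_le zero_le_one,
      intervalIntegral.integral_comp_mul_right (fun x => exp x) hc, integral_exp]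
    simp [div_eq_inv_mul]
  calc ∫ v in Ioi 0, v * (D v * exp (v * c))
      = ∫ v, (φ ⋆[ContinuousLinearMap.mul ℝ ℝ] g) v := by
        rw [← integral_indicator measurableSet_Ioi]
        simp only [hconv]
        congr 1
        ext v
        by_cases hv : v ∈ Ioi (0 : ℝ) <;> simp [g, E, hv]
    _ = (exp c - 1) / c * rhoHat D c := by
        rw [integral_convolution _ hφ hg, hφint, rhoHat, ← integral_indicator measurableSet_Ioi,
          hindicator]
        rfl

theorem one_add_mul_mul_rhoHat_le (hD : IsExtendedDickman D) {c₁ c₂ β : ℝ} (hc₁ : c₁ ≠ 0)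
    (h : c₁ ≤ c₂) (hβ : β ≤ (exp c₁ - 1) / c₁) :
    (1 + (c₂ - c₁) * β) * rhoHat D c₁ ≤ rhoHat D c₂ := by
  have hmoment : β * rhoHat D c₁ ≤ ∫ v in Ioi 0, v * (D v * exp (v * c₁)) := by
    rw [hD.integral_id_mul_eq hc₁]
    exact mul_le_mul_of_nonneg_right hβ (hD.rhoHat_nonneg c₁)
  have hlin : ∫ v in Ioi 0, (D v * exp (v * c₁) + (c₂ - c₁) * (v * (D v * exp (v * c₁)))) ≤
      rhoHat D c₂ := by
    refine setIntegral_mono_on ((hD.integrableOn_rhoHat c₁).add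
      ((hD.integrableOn_id_mul_rhoHat c₁).const_mul _)) (hD.integrableOn_rhoHat c₂)
      measurableSet_Ioi fun v _ => ?_
    have hexp : exp (v * c₁) * (1 + (c₂ - c₁) * v) ≤ exp (v * c₂) := by
      calc exp (v * c₁) * (1 + (c₂ - c₁) * v) ≤ exp (v * c₁) * exp ((c₂ - c₁) * v) := by
            gcongr; linarith [add_one_le_exp ((c₂ - c₁) * v)]
        _ = exp (v * c₂) := by rw [← exp_add]; ring_nf
    nlinarith [mul_le_mul_of_nonneg_left hexp (hD.pos v).le]
  rw [integral_add (hD.integrableOn_rhoHat c₁) ((hD.integrableOn_id_mul_rhoHat c₁).const_mul _),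
    integral_const_mul] at hlin
  rw [rhoHat] at hmoment ⊢
  nlinarith [mul_le_mul_of_nonneg_left hmoment (sub_nonneg.2 h)]

theorem one_add_mul_pow_mul_rhoHat_le (hD : IsExtendedDickman D) {a δ β : ℝ} (ha : 0 < a)
    (hδ : 0 ≤ δ) (hβ₀ : 0 ≤ β) (n : ℕ) (hβ : ∀ x ∈ Icc a (a + n * δ), β ≤ (exp x - 1) / x) :
    (1 + δ * β) ^ n * rhoHat D a ≤ rhoHat D (a + n * δ) := by
  induction n with
  | zero => simp
  | succ n ih =>
    push_cast at hβ ⊢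
    have hnδ : 0 ≤ n * δ := by positivity
    have hstep := hD.one_add_mul_mul_rhoHat_le (c₁ := a + n * δ) (c₂ := a + (n + 1) * δ)
      (by positivity) (by linarith) (hβ _ ⟨by linarith, by linarith⟩)
    calc (1 + δ * β) ^ (n + 1) * rhoHat D a = (1 + δ * β) * ((1 + δ * β) ^ n * rhoHat D a) := by
          ring
      _ ≤ (1 + δ * β) * rhoHat D (a + n * δ) := by
          gcongr
          exact ih fun x hx => hβ x ⟨hx.1, by linarith [hx.2]⟩
      _ ≤ rhoHat D (a + (n + 1) * δ) := by convert hstep using 3; ring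

theorem rhoHat_le_exp_mul_rhoHat_add (hD : IsExtendedDickman D) {a η β : ℝ} (ha : 0 < a)
    (hη : 0 ≤ η) (hβ₀ : 0 ≤ β) (hβ : ∀ x ∈ Icc a (a + η), β ≤ (exp x - 1) / x) :
    rhoHat D a ≤ exp (1 - η * β) * rhoHat D (a + η) := by
  set n := ⌈(η * β) ^ 2⌉₊ + 1
  have hn : (0 : ℝ) < n := by positivity
  have hnδ : (n : ℝ) * (η / n) = η := by field_simp
  have hpow := exp_sub_one_le_one_add_div_pow (mul_nonneg hη hβ₀)
    (by push_cast [n]; linarith [Nat.le_ceil ((η * β) ^ 2)] : (η * β) ^ 2 ≤ n)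
  have hiter := hD.one_add_mul_pow_mul_rhoHat_le (δ := η / n) ha (by positivity) hβ₀ n
    (by rwa [hnδ])
  rw [hnδ, show η / n * β = η * β / n by ring] at hiter
  rw [show 1 - η * β = -(η * β - 1) by ring, exp_neg, inv_mul_eq_div, le_div_iff₀ (exp_pos _),
    mul_comm]
  exact (mul_le_mul_of_nonneg_right hpow (hD.rhoHat_nonneg a)).trans hiter

theorem integral_le_exp_mul_rhoHat (hD : IsExtendedDickman D) {T η : ℝ} (hT : 0 ≤ T)
    (hη : 0 ≤ η) (ξ : ℝ) :
    ∫ v in (0 : ℝ)..T, exp (v * ξ) * D v ≤ exp (η * T) * rhoHat D (ξ - η) := by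
  rw [intervalIntegral.integral_of_le hT, rhoHat, ← integral_const_mul]
  calc ∫ v in Ioc 0 T, exp (v * ξ) * D v
      ≤ ∫ v in Ioc 0 T, exp (η * T) * (D v * exp (v * (ξ - η))) := by
        refine setIntegral_mono_on (Continuous.mul (by fun_prop) hD.continuous).integrableOn_Ioc
          (((hD.integrableOn_rhoHat _).mono_set Ioc_subset_Ioi_self).const_mul _) measurableSet_Ioc
          fun v hv => ?_
        have hexp : exp (v * ξ) ≤ exp (η * T) * exp (v * (ξ - η)) := by
          rw [← exp_add]
          exact exp_le_exp.2 (by nlinarith [hv.2])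
        exact (mul_le_mul_of_nonneg_right hexp (hD.pos v).le).trans_eq (by ring)
    _ ≤ ∫ v in Ioi 0, exp (η * T) * (D v * exp (v * (ξ - η))) :=
        setIntegral_mono_set ((hD.integrableOn_rhoHat _).const_mul _)
          (ae_of_all _ fun v => mul_nonneg (exp_pos _).le (mul_nonneg (hD.pos v).le (exp_pos _).le))
          Ioc_subset_Ioi_self.eventuallyLE

theorem truncated_integral_le (hD : IsExtendedDickman D) {u ξ r : ℝ} (hu : 2 ≤ u) (hr : 1 ≤ r)
    (hur : u = r ^ 3) (hξ : 1 / 2 < ξ) (hξu : exp ξ = 1 + u * ξ) :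
    ∫ v in (0 : ℝ)..(u - r ^ 2), exp (v * ξ) * D v ≤ exp 2 * rhoHat D ξ * exp (-r / 5) := by
  set η := 1 / (2 * r) with hη_def
  have hη : 0 < η ∧ η ≤ 1 / 2 := ⟨by positivity, by rw [div_le_div_iff₀] <;> linarith⟩
  have hηr : η * r = 1 / 2 := by rw [hη_def]; field_simp
  have hT : 0 ≤ u - r ^ 2 := by rw [hur]; nlinarith
  have hβ : 0 ≤ u * (1 - η) - 1 := by nlinarith
  have hgrowth := hD.rhoHat_le_exp_mul_rhoHat_add (a := ξ - η) (by linarith) hη.1.le hβ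
    fun x hx => mul_one_sub_sub_one_le_exp_sub_one_div hξu (by linarith) hβ
      (by simpa using hx) (by linarith [hx.1])
  rw [sub_add_cancel] at hgrowth
  have hexponent : η * (u - r ^ 2) + (1 - η * (u * (1 - η) - 1)) = 1 - r / 4 + η := by
    rw [hur]
    linear_combination (r * (η * r + 1 / 2) - r) * hηr
  calc ∫ v in (0 : ℝ)..(u - r ^ 2), exp (v * ξ) * D v
      ≤ exp (η * (u - r ^ 2)) * rhoHat D (ξ - η) := hD.integral_le_exp_mul_rhoHat hT hη.1.le ξ
    _ ≤ exp (η * (u - r ^ 2)) * (exp (1 - η * (u * (1 - η) - 1)) * rhoHat D ξ) := by gcongr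
    _ = exp (1 - r / 4 + η) * rhoHat D ξ := by rw [← hexponent, exp_add]; ring
    _ ≤ exp (2 + -r / 5) * rhoHat D ξ :=
        mul_le_mul_of_nonneg_right (exp_le_exp.2 (by linarith)) (hD.rhoHat_nonneg ξ)
    _ = exp 2 * rhoHat D ξ * exp (-r / 5) := by rw [exp_add]; ring

end IsExtendedDickman

/-- There is an absolute constant `C` such that for all `u ≥ 2`,
`∫_0^{u - u^{2/3}} e^{v ξ(u)} ρ(v) dv ≤ C ρ̂(-ξ(u)) e^{-u^{1/3}/5}`. -/
theorem truncated_integral_bound :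
    ∃ C : ℝ, 0 < C ∧
      ∀ ρ : ℝ → ℝ, IsDickman ρ →
        ∀ u : ℝ, 2 ≤ u →
          (∫ v in (0 : ℝ)..(u - u ^ ((2 : ℝ) / 3)), Real.exp (v * xiF u) * ρ v) ≤
            C * rhoHat ρ (xiF u) * Real.exp (-u ^ ((1 : ℝ) / 3) / 5) := by
  refine ⟨exp 2, exp_pos 2, fun ρ hρ u hu => ?_⟩
  have hρ_eq : ∀ v, 0 ≤ v → ρ v = ρ (max v 0) := fun v hv => by rw [max_eq_left hv]
  set r := u ^ ((1 : ℝ) / 3)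
  have hr : 1 ≤ r := one_le_rpow (by linarith) (by norm_num)
  have hr3 : u = r ^ 3 := by rw [← rpow_natCast, ← rpow_mul (by linarith)]; norm_num
  have hr2 : u ^ ((2 : ℝ) / 3) = r ^ 2 := by rw [← rpow_natCast, ← rpow_mul (by linarith)]; norm_num
  have hT : 0 ≤ u - r ^ 2 := by rw [hr3]; nlinarith
  have hhat : rhoHat ρ (xiF u) = rhoHat (fun x => ρ (max x 0)) (xiF u) :=
    setIntegral_congr_fun measurableSet_Ioi fun v hv => by simp only [← hρ_eq v (le_of_lt hv)]
  rw [hr2, hhat, intervalIntegral.integral_congr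
    (g := fun v => exp (v * xiF u) * ρ (max v 0)) fun v hv => by
      rw [uIcc_of_le hT] at hv; simp only [← hρ_eq v hv.1]]
  exact hρ.extend.truncated_integral_le hu hr hr3 (half_lt_xiF hu) (xiF_spec (by linarith)).2

end
end
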